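/- Let d ≥ 1, let W ≤ S_d with |W| invertible in K, let K be an integral domain, let χ : W → U(K) be a character, and let E be a free K-module with finite basis (e_ℓ)_{ℓ=1}^n, with dual module E* and dual basis (e_ℓ*). Then: (a) there is a well-defined K-bilinear form B : [χ]^d(E) × [χ⁻¹]^d(E*) → K satisfying B(x₁χ⋯χx_d, x₁*χ⁻¹⋯χ⁻¹x_d*) = d_χ^W((⟨x_i,x_j*⟩)_{i,j=1}^d), where ⟨x,x*⟩ = x*(x); (b) for all j, k ∈ J(χ,n,d) (note J(χ,n,d) = J(χ⁻¹,n,d)) one has B(e_j, e_k*) = |W_j|·δ_{jk}, where e_j = e_{j₁}χ⋯χe_{j_d}, e_k* = e_{k₁}*χ⁻¹⋯χ⁻¹e_{k_d}* and δ is the Kronecker delta; (c) B is non-singular, and the bases (e_j)_{j∈J(χ,n,d)} of [χ]^d(E) and (|W_j|⁻¹·e_j*)_{j∈J(χ,n,d)} of [χ⁻¹]^d(E*) are dual with respect to B. -/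

import Mathlib

noncomputable section

open scoped TensorProduct

/-- The action of a permutation `σ` of `Fin d` on the `d`-th tensor power
`T^d(E)`, determined by `σ • (x₁ ⊗ ⋯ ⊗ x_d) = x_{σ⁻¹(1)} ⊗ ⋯ ⊗ x_{σ⁻¹(d)}`. -/
def permAct (K : Type*) [CommRing K] (E : Type*) [AddCommGroup E] [Module K E]
    (d : ℕ) (σ : Equiv.Perm (Fin d)) :
    (⨂[K] (_ : Fin d), E) ≃ₗ[K] ⨂[K] (_ : Fin d), E :=
  PiTensorProduct.reindex K (fun _ : Fin d => E) σ

/-- The submodule `_{χ⁻¹}T^d(E)` of `T^d(E)` generated by the elements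
`χ⁻¹(σ) z − σ z` for `σ ∈ W`; the quotient by it is the `d`-th
semi-symmetric power `[χ]^d(E)` of weight `χ`. -/
def chiKer {K : Type*} [CommRing K] (E : Type*) [AddCommGroup E] [Module K E]
    {d : ℕ} (W : Subgroup (Equiv.Perm (Fin d))) (χ : W →* Kˣ) :
    Submodule K (⨂[K] (_ : Fin d), E) :=
  Submodule.span K {w | ∃ (σ : W) (z : ⨂[K] (_ : Fin d), E),
    w = (((χ σ)⁻¹ : Kˣ) : K) • z - permAct K E d (σ : Equiv.Perm (Fin d)) z}

/-- The `d`-th semi-symmetric power `[χ]^d(E) = T^d(E)/_{χ⁻¹}T^d(E)`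
of weight `χ` of the `K`-module `E`. -/
abbrev SemiPow {K : Type*} [CommRing K] (E : Type*) [AddCommGroup E] [Module K E]
    {d : ℕ} (W : Subgroup (Equiv.Perm (Fin d))) (χ : W →* Kˣ) :=
  (⨂[K] (_ : Fin d), E) ⧸ chiKer E W χ

/-- The decomposable `d-χ`-vector `x₁ χ ⋯ χ x_d`. -/
def semiMk {K : Type*} [CommRing K] {E : Type*} [AddCommGroup E] [Module K E]
    {d : ℕ} (W : Subgroup (Equiv.Perm (Fin d))) (χ : W →* Kˣ)
    (x : Fin d → E) : SemiPow E W χ :=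
  Submodule.Quotient.mk (PiTensorProduct.tprod K x)


/-- The generalized Schur function
`d_χ^W(A) = Σ_{σ ∈ W} χ(σ) · a_{σ⁻¹(1),1} ⋯ a_{σ⁻¹(d),d}`. -/
def schurFn {K : Type*} [CommRing K] {d : ℕ} (W : Subgroup (Equiv.Perm (Fin d)))
    (χ : W →* Kˣ) (A : Matrix (Fin d) (Fin d) K) : K :=
  ∑ᶠ σ : W, ((χ σ : Kˣ) : K) * ∏ t : Fin d, A (((σ : Equiv.Perm (Fin d)))⁻¹ t) t

/-- Strict lexicographic comparison of functions. -/
def lexLT {ι : Type*} [LT ι] {α : Type*} [LT α] (f g : ι → α) : Prop :=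
  Pi.Lex (· < ·) (fun {_} => (· < ·)) f g

/-- The set `J(χ,n,d)` of multi-indices `i ∈ [1,n]^d` that are
lexicographically minimal in their `W`-orbit (for the action
`(σ i)_t = i_{σ⁻¹(t)}`) and on whose stabilizer `W_i` the character `χ`
is trivial. -/
def Jset {K : Type*} [CommRing K] {d : ℕ} (W : Subgroup (Equiv.Perm (Fin d)))
    (χ : W →* Kˣ) (n : ℕ) : Set (Fin d → Fin n) :=
  {i | (∀ σ : W, i ∘ ⇑(((σ : Equiv.Perm (Fin d)))⁻¹) = i → χ σ = 1) ∧
       (∀ σ : W, ¬ lexLT (i ∘ ⇑(((σ : Equiv.Perm (Fin d)))⁻¹)) i)}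

/-- The order of the stabilizer `W_i` of a multi-index `i`. -/
def stabCard {d : ℕ} (W : Subgroup (Equiv.Perm (Fin d))) {n : ℕ}
    (i : Fin d → Fin n) : ℕ :=
  Nat.card {σ : W // i ∘ ⇑(((σ : Equiv.Perm (Fin d)))⁻¹) = i}

/-! The pairing is `B(u, v) = ∑_{σ ∈ W} χ(σ) ⟨σ u, v⟩` on `T^d(E) × T^d(E*)`. It transforms by
`χ(σ)⁻¹` in the first and by `χ(σ)` in the second variable, so it descends to
`[χ]^d(E) × [χ⁻¹]^d(E*)`. On basis tensors `B(e_j, e*_k) = ∑_{σ : j ∘ σ⁻¹ = k} χ(σ)`, which for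
`j, k ∈ J(χ,n,d)` is `|W_j| δ_{jk}` because distinct elements of `J` lie in distinct orbits.
The classes `e_j`, `j ∈ J`, span `[χ]^d(E)`: each `e_i` is a unit multiple of `e_j` for the
lexicographically least `j` in its orbit, unless `χ` is nontrivial on `W_i`; then the averaging
operator `∑ χ(σ) σ` kills `e_i`, since `T^d(E)` is torsion-free, and `e_i` is `|W|⁻¹` times the
class of its average. A pairing that is diagonal with unit entries between two spanning families
makes both families bases and the pairing perfect. -/
open Module PiTensorProduct

section Pairing

variable {ι R M N : Type*} [DecidableEq ι] [CommRing R] [AddCommGroup M] [Module R M]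
  [AddCommGroup N] [Module R N] (B : M →ₗ[R] N →ₗ[R] R) {e : ι → M} {f : ι → N} {u : ι → R}

lemma linearIndependent_of_pairing_eq_ite (hu : ∀ i, IsUnit (u i))
    (h : ∀ i j, B (e i) (f j) = if i = j then u i else 0) : LinearIndependent R e := by
  refine linearIndependent_iff'.mpr fun s g hsum j hj => ?_
  have hpair := congrArg (fun m => B m (f j)) hsum
  simp only [map_sum, map_smul, LinearMap.coe_sum, LinearMap.coe_smul, Finset.sum_apply,
    Pi.smul_apply, h, smul_eq_mul, mul_ite, mul_zero, Finset.sum_ite_eq', hj, if_true, map_zero,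
    LinearMap.zero_apply] at hpair
  exact (hu j).mul_left_eq_zero.mp hpair

lemma pairing_flip_eq_ite (h : ∀ i j, B (e i) (f j) = if i = j then u i else 0) (i j : ι) :
    B.flip (f i) (e j) = if i = j then u i else 0 := by
  rw [LinearMap.flip_apply, h]
  split_ifs <;> simp_all

lemma bijective_of_pairing_eq_ite [Finite ι] (hu : ∀ i, IsUnit (u i))
    (he : Submodule.span R (Set.range e) = ⊤) (hf : Submodule.span R (Set.range f) = ⊤)
    (h : ∀ i j, B (e i) (f j) = if i = j then u i else 0) : Function.Bijective B := by
  let bE := Basis.mk (linearIndependent_of_pairing_eq_ite B hu h) he.ge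
  have hf' := linearIndependent_of_pairing_eq_ite B.flip hu (pairing_flip_eq_ite B h)
  let bF := Basis.mk hf' hf.ge
  let bD := bF.dualBasis.unitsSMul fun i => (hu i).unit
  suffices B = (bE.equiv bD (Equiv.refl ι)).toLinearMap from this ▸ LinearEquiv.bijective _
  refine bE.ext fun i => bF.ext fun j => ?_
  rw [LinearEquiv.coe_coe, Basis.equiv_apply, Equiv.refl_apply, Basis.unitsSMul_apply,
    Units.smul_def, LinearMap.smul_apply, Basis.dualBasis_apply_self, IsUnit.unit_spec,
    Basis.mk_apply, Basis.mk_apply, h, smul_eq_mul, mul_ite, mul_one, mul_zero]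
  exact if_congr eq_comm rfl rfl

end Pairing

section TensorPower

variable {K : Type*} [CommRing K] {E : Type*} [AddCommGroup E] [Module K E] {d : ℕ}

lemma permAct_tprod (σ : Equiv.Perm (Fin d)) (x : Fin d → E) :
    permAct K E d σ (tprod K x) = tprod K (x ∘ ⇑σ⁻¹) :=
  reindex_tprod σ x

lemma permAct_mul (σ τ : Equiv.Perm (Fin d)) (z : ⨂[K] (_ : Fin d), E) :
    permAct K E d (σ * τ) z = permAct K E d σ (permAct K E d τ z) :=
  (reindex_reindex τ σ z).symm

variable (K E d) in
def tensorPairing : (⨂[K] (_ : Fin d), E) →ₗ[K] (⨂[K] (_ : Fin d), Dual K E) →ₗ[K] K :=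
  (dualDistrib (R := K) (M := fun _ : Fin d => E)).flip

lemma tensorPairing_tprod (x : Fin d → E) (y : Fin d → Dual K E) :
    tensorPairing K E d (tprod K x) (tprod K y) = ∏ t, y t (x t) := by
  simp [tensorPairing]

lemma tensorPairing_permAct (σ : Equiv.Perm (Fin d)) (u : ⨂[K] (_ : Fin d), E)
    (v : ⨂[K] (_ : Fin d), Dual K E) :
    tensorPairing K E d (permAct K E d σ u) (permAct K (Dual K E) d σ v)
      = tensorPairing K E d u v := by
  suffices ((tensorPairing K E d).comp (permAct K E d σ).toLinearMap).compl₂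
      (permAct K (Dual K E) d σ).toLinearMap = tensorPairing K E d from
    LinearMap.congr_fun₂ this u v
  refine PiTensorProduct.ext <| MultilinearMap.ext fun x => PiTensorProduct.ext <|
    MultilinearMap.ext fun y => ?_
  simp only [LinearMap.compMultilinearMap_apply, LinearMap.compl₂_apply, LinearMap.coe_comp,
    LinearEquiv.coe_coe, Function.comp_apply, permAct_tprod, tensorPairing_tprod]
  exact Equiv.prod_comp σ⁻¹ fun t => y t (x t)

end TensorPower

section SemiPow

variable {K : Type*} [CommRing K] {E : Type*} [AddCommGroup E] [Module K E] {d : ℕ}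
  (W : Subgroup (Equiv.Perm (Fin d))) (χ : W →* Kˣ)

lemma chiKer_le_ker {P : Type*} [AddCommGroup P] [Module K P]
    (f : (⨂[K] (_ : Fin d), E) →ₗ[K] P)
    (hf : ∀ (σ : W) z, f (permAct K E d σ z) = (((χ σ)⁻¹ : Kˣ) : K) • f z) :
    chiKer E W χ ≤ LinearMap.ker f := by
  rw [chiKer, Submodule.span_le]
  rintro _ ⟨σ, z, rfl⟩
  simp [hf]

lemma mk_permAct (σ : W) (z : ⨂[K] (_ : Fin d), E) :
    (Submodule.Quotient.mk (permAct K E d σ z) : SemiPow E W χ)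
      = (((χ σ)⁻¹ : Kˣ) : K) • Submodule.Quotient.mk z := by
  rw [← Submodule.Quotient.mk_smul, eq_comm, Submodule.Quotient.eq]
  exact Submodule.subset_span ⟨σ, z, rfl⟩

lemma semiMk_comp_inv (σ : W) (x : Fin d → E) :
    semiMk W χ (x ∘ ⇑(σ : Equiv.Perm (Fin d))⁻¹) = (((χ σ)⁻¹ : Kˣ) : K) • semiMk W χ x := by
  rw [semiMk, ← permAct_tprod, mk_permAct, semiMk]

variable [Fintype W]

def charSum {P : Type*} [AddCommGroup P] [Module K P] (f : (⨂[K] (_ : Fin d), E) →ₗ[K] P) :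
    (⨂[K] (_ : Fin d), E) →ₗ[K] P :=
  ∑ σ : W, ((χ σ : Kˣ) : K) • f ∘ₗ (permAct K E d σ).toLinearMap

lemma charSum_apply {P : Type*} [AddCommGroup P] [Module K P]
    (f : (⨂[K] (_ : Fin d), E) →ₗ[K] P) (z : ⨂[K] (_ : Fin d), E) :
    charSum W χ f z = ∑ σ : W, ((χ σ : Kˣ) : K) • f (permAct K E d σ z) := by
  simp [charSum]

lemma charSum_permAct {P : Type*} [AddCommGroup P] [Module K P]
    (f : (⨂[K] (_ : Fin d), E) →ₗ[K] P) (τ : W) (z : ⨂[K] (_ : Fin d), E) :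
    charSum W χ f (permAct K E d τ z) = (((χ τ)⁻¹ : Kˣ) : K) • charSum W χ f z := by
  rw [charSum_apply, charSum_apply, Finset.smul_sum]
  refine Fintype.sum_equiv (Equiv.mulRight τ) _ _ fun σ => ?_
  rw [Equiv.coe_mulRight, Subgroup.coe_mul, permAct_mul, smul_smul, ← Units.val_mul, map_mul,
    inv_mul_cancel_comm_assoc]

lemma mk_charSum_id (z : ⨂[K] (_ : Fin d), E) :
    (Submodule.Quotient.mk (charSum (E := E) W χ LinearMap.id z) : SemiPow E W χ)
      = (Nat.card W : K) • Submodule.Quotient.mk z := by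
  simp only [charSum_apply, LinearMap.id_apply, ← Submodule.mkQ_apply, map_sum, map_smul]
  simp only [Submodule.mkQ_apply, mk_permAct, smul_smul, Units.mul_inv, one_smul, Finset.sum_const,
    Finset.card_univ, Nat.card_eq_fintype_card, Nat.cast_smul_eq_nsmul]

lemma mk_eq_zero_of_permAct_eq [IsDomain K] [Module.IsTorsionFree K (⨂[K] (_ : Fin d), E)]
    (hcard : IsUnit (Nat.card W : K)) {τ : W} (hτ : χ τ ≠ 1) {z : ⨂[K] (_ : Fin d), E}
    (hz : permAct K E d τ z = z) : (Submodule.Quotient.mk z : SemiPow E W χ) = 0 := by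
  have hfix : ((((χ τ)⁻¹ : Kˣ) : K) - 1) • charSum (E := E) W χ LinearMap.id z = 0 := by
    rw [sub_smul, one_smul, ← charSum_permAct, hz, sub_self]
  rw [smul_eq_zero] at hfix
  have hsum : charSum (E := E) W χ LinearMap.id z = 0 := hfix.resolve_left fun h => hτ <| by
    rw [sub_eq_zero] at h
    exact inv_eq_one.mp (Units.ext h)
  rw [← hcard.smul_left_cancel, ← mk_charSum_id, hsum, Submodule.Quotient.mk_zero, smul_zero]

end SemiPow

section SemiPairing

variable {K : Type*} [CommRing K] {E : Type*} [AddCommGroup E] [Module K E] {d : ℕ}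
  (W : Subgroup (Equiv.Perm (Fin d))) (χ : W →* Kˣ) [Fintype W]

lemma charSum_tensorPairing_permAct_right (σ : W) (u : ⨂[K] (_ : Fin d), E)
    (v : ⨂[K] (_ : Fin d), Dual K E) :
    charSum W χ (tensorPairing K E d) u (permAct K (Dual K E) d σ v)
      = ((χ σ : Kˣ) : K) * charSum W χ (tensorPairing K E d) u v := by
  simp only [charSum_apply, LinearMap.sum_apply, LinearMap.smul_apply, smul_eq_mul, Finset.mul_sum]
  refine (Fintype.sum_equiv (Equiv.mulLeft σ) _ _ fun ρ => ?_).symm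
  rw [Equiv.coe_mulLeft, Subgroup.coe_mul, permAct_mul, tensorPairing_permAct, map_mul,
    Units.val_mul, mul_assoc]

variable (E) in
def semiPairing : SemiPow E W χ →ₗ[K] SemiPow (Dual K E) W χ⁻¹ →ₗ[K] K :=
  (charSum W χ (tensorPairing K E d)).liftQ₂ _ _
    (chiKer_le_ker W χ _ (charSum_permAct W χ _))
    (chiKer_le_ker W χ⁻¹ _ fun σ v => LinearMap.ext fun u => by
      simp [charSum_tensorPairing_permAct_right])

lemma semiPairing_semiMk (x : Fin d → E) (y : Fin d → Dual K E) :
    semiPairing E W χ (semiMk W χ x) (semiMk W χ⁻¹ y)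
      = schurFn W χ (Matrix.of fun i j => y j (x i)) := by
  simp only [semiPairing, semiMk, LinearMap.liftQ₂_mk, charSum_apply, permAct_tprod,
    LinearMap.sum_apply, LinearMap.smul_apply, smul_eq_mul, tensorPairing_tprod, schurFn,
    finsum_eq_sum_of_fintype, Matrix.of_apply, Function.comp_apply]

end SemiPairing

section MultiIndex

variable {d n : ℕ} (W : Subgroup (Equiv.Perm (Fin d)))

lemma comp_mul_inv (i : Fin d → Fin n) (σ τ : Equiv.Perm (Fin d)) :
    i ∘ ⇑(σ * τ)⁻¹ = (i ∘ ⇑τ⁻¹) ∘ ⇑σ⁻¹ := by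
  rw [mul_inv_rev, Equiv.Perm.coe_mul]
  rfl

def multiIndexStabilizer (i : Fin d → Fin n) : Subgroup W where
  carrier := {σ | i ∘ ⇑(σ : Equiv.Perm (Fin d))⁻¹ = i}
  one_mem' := rfl
  mul_mem' {σ τ} hσ hτ := by
    simp only [Set.mem_ofPred_eq, Subgroup.coe_mul, comp_mul_inv] at *
    rw [hτ, hσ]
  inv_mem' {σ} hσ := by
    simp only [Set.mem_ofPred_eq, InvMemClass.coe_inv, inv_inv] at *
    conv_lhs => rw [← hσ]
    ext t
    simp

lemma isUnit_stabCard {K : Type*} [CommRing K] (hcard : IsUnit (Nat.card W : K))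
    (i : Fin d → Fin n) : IsUnit (stabCard W i : K) :=
  isUnit_of_dvd_unit (Nat.cast_dvd_cast (multiIndexStabilizer W i).card_subgroup_dvd_card) hcard

variable {K : Type*} [CommRing K] (χ : W →* Kˣ)

lemma Jset_inv : Jset W χ⁻¹ n = Jset W χ n := by
  ext i
  simp [Jset]

lemma eq_of_mem_Jset_of_comp_eq {j k : Fin d → Fin n} (hj : j ∈ Jset W χ n)
    (hk : k ∈ Jset W χ n) (σ : W) (h : j ∘ ⇑(σ : Equiv.Perm (Fin d))⁻¹ = k) : j = k := by
  have hkj : k ∘ ⇑((σ⁻¹ : W) : Equiv.Perm (Fin d))⁻¹ = j := by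
    rw [← h]; ext t; simp
  rcases lt_trichotomy (toLex j) (toLex k) with hlt | heq | hgt
  · exact absurd (hkj ▸ hlt) (hk.2 σ⁻¹)
  · exact heq
  · exact absurd (h ▸ hgt) (hj.2 σ)

lemma exists_comp_mem_Jset {i : Fin d → Fin n}
    (hi : ∀ σ : W, i ∘ ⇑(σ : Equiv.Perm (Fin d))⁻¹ = i → χ σ = 1) :
    ∃ σ : W, i ∘ ⇑(σ : Equiv.Perm (Fin d))⁻¹ ∈ Jset W χ n := by
  obtain ⟨σ, hmin⟩ := Finite.exists_min fun σ : W => toLex (i ∘ ⇑(σ : Equiv.Perm (Fin d))⁻¹)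
  refine ⟨σ, fun τ hτ => ?_, fun τ hlt => ?_⟩
  · have hconj : i ∘ ⇑((σ⁻¹ * τ * σ : W) : Equiv.Perm (Fin d))⁻¹ = i := by
      funext t
      simpa using congrFun hτ ((σ : Equiv.Perm (Fin d)) t)
    rw [← hi _ hconj, map_mul, map_mul, map_inv, mul_comm, mul_inv_cancel_left]
  · have hle := hmin (τ * σ)
    rw [Subgroup.coe_mul, comp_mul_inv] at hle
    exact not_lt_of_ge hle hlt

variable [Fintype W]

lemma sum_ite_comp_eq_of_mem_Jset {j k : Fin d → Fin n} (hj : j ∈ Jset W χ n)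
    (hk : k ∈ Jset W χ n) :
    (∑ σ : W, if j ∘ ⇑(σ : Equiv.Perm (Fin d))⁻¹ = k then ((χ σ : Kˣ) : K) else 0)
      = if j = k then (stabCard W j : K) else 0 := by
  classical
  split_ifs with hjk
  · subst hjk
    rw [stabCard, Nat.card_eq_fintype_card, Fintype.card_subtype, ← Finset.sum_boole]
    refine Finset.sum_congr rfl fun σ _ => ?_
    split_ifs with hσ
    · rw [hj.1 σ hσ, Units.val_one]
    · rfl
  · exact Finset.sum_eq_zero fun σ _ =>
      if_neg fun h => hjk (eq_of_mem_Jset_of_comp_eq W χ hj hk σ h)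

end MultiIndex

section Basis

variable {K : Type*} [CommRing K] {E : Type*} [AddCommGroup E] [Module K E] {d n : ℕ}
  (W : Subgroup (Equiv.Perm (Fin d))) (χ : W →* Kˣ) [Fintype W] (b : Basis (Fin n) K E)

lemma semiMk_basis_mem_span [IsDomain K] (hcard : IsUnit (Nat.card W : K)) (i : Fin d → Fin n) :
    semiMk W χ (fun t => b (i t))
      ∈ Submodule.span K (Set.range fun j : Jset W χ n => semiMk W χ fun t => b (j.1 t)) := by
  by_cases hi : ∀ σ : W, i ∘ ⇑(σ : Equiv.Perm (Fin d))⁻¹ = i → χ σ = 1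
  · obtain ⟨σ, hσ⟩ := exists_comp_mem_Jset W χ hi
    have hmk : semiMk W χ (fun t => b (i t))
        = ((χ σ : Kˣ) : K) • semiMk W χ fun t => b ((i ∘ ⇑(σ : Equiv.Perm (Fin d))⁻¹) t) := by
      rw [show (fun t => b ((i ∘ ⇑(σ : Equiv.Perm (Fin d))⁻¹) t))
          = (fun t => b (i t)) ∘ ⇑(σ : Equiv.Perm (Fin d))⁻¹ from rfl,
        semiMk_comp_inv, smul_smul, Units.mul_inv, one_smul]
    rw [hmk]
    exact Submodule.smul_mem _ _ (Submodule.subset_span ⟨⟨_, hσ⟩, rfl⟩)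
  · push Not at hi
    obtain ⟨τ, hτ, hχ⟩ := hi
    have := (Basis.piTensorProduct fun _ : Fin d => b).isTorsionFree
    have hfix : permAct K E d τ (tprod K fun t => b (i t)) = tprod K fun t => b (i t) := by
      rw [permAct_tprod]
      exact congrArg (fun j => tprod K fun t => b (j t)) hτ
    rw [semiMk, mk_eq_zero_of_permAct_eq W χ hcard hχ hfix]
    exact Submodule.zero_mem _

lemma span_semiMk_basis [IsDomain K] (hcard : IsUnit (Nat.card W : K)) :
    Submodule.span K (Set.range fun j : Jset W χ n => semiMk W χ fun t => b (j.1 t)) = ⊤ := by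
  have hspan := congrArg (Submodule.map (chiKer E W χ).mkQ)
    (Basis.piTensorProduct fun _ : Fin d => b).span_eq
  rw [Submodule.map_span, ← Set.range_comp, Submodule.map_top, Submodule.range_mkQ] at hspan
  rw [eq_top_iff, ← hspan, Submodule.span_le]
  rintro _ ⟨i, rfl⟩
  simpa [semiMk] using semiMk_basis_mem_span W χ b hcard i

lemma semiPairing_basis {j k : Fin d → Fin n} (hj : j ∈ Jset W χ n) (hk : k ∈ Jset W χ n) :
    semiPairing E W χ (semiMk W χ fun t => b (j t)) (semiMk W χ⁻¹ fun t => b.dualBasis (k t))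
      = if j = k then (stabCard W j : K) else 0 := by
  rw [semiPairing_semiMk, ← sum_ite_comp_eq_of_mem_Jset W χ hj hk]
  simp only [schurFn, finsum_eq_sum_of_fintype, Matrix.of_apply, Basis.dualBasis_apply_self,
    Fintype.prod_ite_zero, Finset.prod_const_one, mul_ite, mul_one, mul_zero]
  simp only [← Function.comp_apply (f := j), ← funext_iff]

end Basis

open Classical in
/-- Theorem III.1 (i), (iii). There is a (well-defined)
bilinear form `B : [χ]^d(E) × [χ⁻¹]^d(E*) → K` with
`B(x₁χ⋯χx_d, x₁*χ⁻¹⋯χ⁻¹x_d*) = d_χ^W((⟨x_i,x_j*⟩))`; on basis vectors it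
satisfies `B(e_j, e_k*) = |W_j| δ_{jk}` for `j,k ∈ J(χ,n,d)`; it is
non-singular, and `(e_j)_j`, `(|W_j|⁻¹ e_j*)_j` is a pair of dual bases. -/
theorem semiPow_pairing {K : Type*} [CommRing K] [IsDomain K]
    {E : Type*} [AddCommGroup E] [Module K E]
    {d : ℕ} (W : Subgroup (Equiv.Perm (Fin d))) (χ : W →* Kˣ)
    (hcard : IsUnit ((Nat.card W : K)))
    {n : ℕ} (b : Module.Basis (Fin n) K E) :
    ∃ B : SemiPow E W χ →ₗ[K] SemiPow (Module.Dual K E) W χ⁻¹ →ₗ[K] K,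
      (∀ (x : Fin d → E) (y : Fin d → Module.Dual K E),
        B (semiMk W χ x) (semiMk W χ⁻¹ y)
          = schurFn W χ (Matrix.of fun i j => y j (x i))) ∧
      (∀ j k : Fin d → Fin n, j ∈ Jset W χ n → k ∈ Jset W χ n →
        B (semiMk W χ (fun t => b (j t))) (semiMk W χ⁻¹ (fun t => b.dualBasis (k t)))
          = (stabCard W j : K) * (if j = k then 1 else 0)) ∧
      Function.Bijective B ∧ Function.Bijective B.flip ∧
      (∀ j k : Fin d → Fin n, j ∈ Jset W χ n → k ∈ Jset W χ n →
        B (semiMk W χ (fun t => b (j t)))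
          (Ring.inverse ((stabCard W k : K)) •
            semiMk W χ⁻¹ (fun t => b.dualBasis (k t)))
          = if j = k then 1 else 0) := by
  have hunit : ∀ j : Fin d → Fin n, IsUnit (stabCard W j : K) := isUnit_stabCard W hcard
  have hdiag : ∀ j k : Jset W χ n,
      semiPairing E W χ (semiMk W χ fun t => b (j.1 t))
          (semiMk W χ⁻¹ fun t => b.dualBasis (k.1 t))
        = if j = k then (stabCard W j.1 : K) else 0 := fun j k => by
    rw [semiPairing_basis W χ b j.2 k.2]
    exact if_congr Subtype.ext_iff.symm rfl rfl
  have hspanE := span_semiMk_basis W χ b hcard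
  have hspanD := span_semiMk_basis W χ⁻¹ b.dualBasis hcard
  rw [Jset_inv] at hspanD
  refine ⟨semiPairing E W χ, semiPairing_semiMk W χ, fun j k hj hk => ?_,
    bijective_of_pairing_eq_ite _ (fun j => hunit j.1) hspanE hspanD hdiag,
    bijective_of_pairing_eq_ite _ (fun j => hunit j.1) hspanD hspanE
      (pairing_flip_eq_ite _ hdiag), fun j k hj hk => ?_⟩
  · rw [semiPairing_basis W χ b hj hk, mul_ite, mul_one, mul_zero]
  · rw [map_smul, semiPairing_basis W χ b hj hk, smul_eq_mul, mul_ite, mul_zero]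
    split_ifs with hjk
    · rw [hjk, Ring.inverse_mul_cancel _ (hunit k)]
    · rfl
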